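/- Let P = P1 ∪ P2 be a propositional logic program such that P2 potentially uses P1 (no atom occurring in the head of a rule of P2 occurs anywhere in P1). Then for every stable model M of P, the restriction M|_{P1} of M to the atoms occurring in P1 is a stable model of P1. -/

import Mathlib

/-- A propositional logic-program rule `head :- pos, not neg`.
`head = none` represents a strong constraint (rule with empty head). -/
structure LPRule where
  head : Option ℕ
  pos : Finset ℕ
  neg : Finset ℕ
deriving DecidableEq

namespace LP

/-- Truth of a rule head w.r.t. an interpretation; an empty head is never true. -/
def headTrue (I : Set ℕ) : Option ℕ → Prop
  | none => False
  | some a => a ∈ I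

/-- The body of a rule is true w.r.t. `I`. -/
def bodyTrue (I : Set ℕ) (r : LPRule) : Prop :=
  (∀ b ∈ r.pos, b ∈ I) ∧ (∀ b ∈ r.neg, b ∉ I)

/-- `I` satisfies rule `r`. -/
def satRule (I : Set ℕ) (r : LPRule) : Prop := bodyTrue I r → headTrue I r.head

/-- `I` is a model of the program `P`. -/
def isModel (P : Set LPRule) (I : Set ℕ) : Prop := ∀ r ∈ P, satRule I r

/-- A positive (negation-free) program. -/
def isPositive (P : Set LPRule) : Prop := ∀ r ∈ P, r.neg = ∅

/-- A constraint-free program (no rules with empty head). -/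
def constraintFree (P : Set LPRule) : Prop := ∀ r ∈ P, r.head ≠ none

/-- The Gelfond-Lifschitz reduct `P^I`. -/
def reduct (P : Set LPRule) (I : Set ℕ) : Set LPRule :=
  (fun r => LPRule.mk r.head r.pos ∅) '' {r ∈ P | ∀ b ∈ r.neg, b ∉ I}

/-- `M` is the least model of `P`. -/
def isLeastModel (P : Set LPRule) (M : Set ℕ) : Prop :=
  isModel P M ∧ ∀ M', isModel P M' → M ⊆ M'

/-- `M` is a stable model of `P`: it is the least model of the reduct `P^M`. -/
def isStable (P : Set LPRule) (M : Set ℕ) : Prop := isLeastModel (reduct P M) M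

/-- `facts S` is the set of facts `{p :- | p ∈ S}`. -/
def facts (S : Set ℕ) : Set LPRule := (fun p => LPRule.mk (some p) ∅ ∅) '' S

/-- The atoms occurring in a rule. -/
def ruleAtoms (r : LPRule) : Set ℕ := {a | r.head = some a} ∪ ↑r.pos ∪ ↑r.neg

/-- The Herbrand base of a program: all atoms occurring in it. -/
def atoms (P : Set LPRule) : Set ℕ := ⋃ r ∈ P, ruleAtoms r

/-- `p` depends on `q`: some rule has head `p` and `q` in its body. -/
def dependsOn (P : Set LPRule) (p q : ℕ) : Prop :=
  ∃ r ∈ P, r.head = some p ∧ (q ∈ r.pos ∨ q ∈ r.neg)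

/-- `P` is stratified: no rule with head `p` and `not q` in the body where
`q` transitively depends on `p`. -/
def stratified (P : Set LPRule) : Prop :=
  ∀ r ∈ P, ∀ p, r.head = some p → ∀ q ∈ r.neg, ¬ Relation.TransGen (dependsOn P) q p

/-- Hypotheses `H` do not occur in rule heads of `P`. -/
def hypFree (P : Set LPRule) (H : Finset ℕ) : Prop :=
  ∀ r ∈ P, ∀ h ∈ H, r.head ≠ some h

/-- `S` is an admissible solution: `S ⊆ H` and some stable model of
`P ∪ facts S` makes all observations true. -/
def admissible (P : Set LPRule) (H obsP obsN : Finset ℕ) (S : Set ℕ) : Prop :=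
  S ⊆ ↑H ∧ ∃ M, isStable (P ∪ facts S) M ∧ (∀ o ∈ obsP, o ∈ M) ∧ (∀ o ∈ obsN, o ∉ M)

/-- `sum_γ`: total penalty of the hypotheses of `H` belonging to `S`. -/
noncomputable def cost (γ : ℕ → NNReal) (H : Finset ℕ) (S : Set ℕ) : NNReal :=
  ∑ h ∈ H, S.indicator γ h

/-- `S` is an optimal solution: admissible with minimal total penalty. -/
def optimal (P : Set LPRule) (H obsP obsN : Finset ℕ) (γ : ℕ → NNReal) (S : Set ℕ) : Prop :=
  admissible P H obsP obsN S ∧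
  ∀ S', admissible P H obsP obsN S' → cost γ H S ≤ cost γ H S'

end LP

namespace LP

/-- `P2` potentially uses `P1`: no head atom of `P2` occurs in `P1`. -/
def potentiallyUses (P2 P1 : Set LPRule) : Prop :=
  ∀ r ∈ P2, ∀ a, r.head = some a → a ∉ atoms P1

/-- The translated program `lpw(𝒫)`: the original program `P`, the guessing rules
`h :- sol h`, `sol h :- not nsol h`, `nsol h :- not sol h` for each hypothesis `h ∈ H`,
and the strong constraints `:- not a` (resp. `:- a`) for positive (resp. negative)
observations. -/
def lpw (P : Set LPRule) (H obsP obsN : Finset ℕ) (sol nsol : ℕ → ℕ) : Set LPRule :=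
  P ∪ (⋃ h ∈ (↑H : Set ℕ),
        {LPRule.mk (some h) {sol h} ∅,
         LPRule.mk (some (sol h)) ∅ {nsol h},
         LPRule.mk (some (nsol h)) ∅ {sol h}})
    ∪ ((fun a => LPRule.mk none ∅ {a}) '' ↑obsP)
    ∪ ((fun a => LPRule.mk none {a} ∅) '' ↑obsN)

/-- The atoms `sol h` and `nsol h` are pairwise distinct fresh atoms not occurring
in `P`, `H`, or among the observations. -/
def freshAtoms (P : Set LPRule) (H obsP obsN : Finset ℕ) (sol nsol : ℕ → ℕ) : Prop :=
  Function.Injective sol ∧ Function.Injective nsol ∧ (∀ h h', sol h ≠ nsol h') ∧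
  ∀ h ∈ H, sol h ∉ atoms P ∪ ↑H ∪ ↑obsP ∪ ↑obsN ∧
           nsol h ∉ atoms P ∪ ↑H ∪ ↑obsP ∪ ↑obsN

/-- The total weak-constraint penalty of a model `M`: the weak constraint `:~ h [γ(h)]`
is violated by `M` iff `h ∈ M`, so the penalty is the sum of `γ(h)` over `h ∈ H ∩ M`. -/
noncomputable def penalty (γ : ℕ → NNReal) (H : Finset ℕ) (M : Set ℕ) : NNReal :=
  cost γ H M

/-- `M` is a best model of the translated program: a stable model (which in particular
satisfies all strong constraints) minimizing the total weight of violated weak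
constraints. -/
def isBest (P : Set LPRule) (H obsP obsN : Finset ℕ) (γ : ℕ → NNReal)
    (sol nsol : ℕ → ℕ) (M : Set ℕ) : Prop :=
  isStable (lpw P H obsP obsN sol nsol) M ∧
  ∀ M', isStable (lpw P H obsP obsN sol nsol) M' → penalty γ H M ≤ penalty γ H M'

end LP

namespace LP

variable {P P1 P2 : Set LPRule} {I J M N : Set ℕ} {r : LPRule}

theorem headTrue_mono (hIJ : I ⊆ J) : ∀ {h : Option ℕ}, headTrue I h → headTrue J h
  | some _, ha => hIJ ha

theorem headTrue_inter : ∀ {h : Option ℕ}, headTrue (I ∩ J) h ↔ headTrue I h ∧ headTrue J h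
  | none => ⟨False.elim, And.left⟩
  | some _ => Iff.rfl

theorem isModel_reduct_iff :
    isModel (reduct P I) J ↔
      ∀ r ∈ P, (∀ b ∈ r.neg, b ∉ I) → (∀ b ∈ r.pos, b ∈ J) → headTrue J r.head := by
  constructor
  · intro hJ r hr hneg hpos
    exact hJ ⟨r.head, r.pos, ∅⟩ ⟨r, ⟨hr, hneg⟩, rfl⟩ ⟨hpos, by simp⟩
  · rintro hJ _ ⟨r, ⟨hr, hneg⟩, rfl⟩ ⟨hpos, -⟩
    exact hJ r hr hneg hpos

theorem ruleAtoms_subset_atoms (hr : r ∈ P) : ruleAtoms r ⊆ atoms P :=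
  Set.subset_biUnion_of_mem hr

theorem mem_atoms_of_mem_pos (hr : r ∈ P) {b : ℕ} (hb : b ∈ r.pos) : b ∈ atoms P :=
  ruleAtoms_subset_atoms hr (Or.inl (Or.inr hb))

theorem mem_atoms_of_mem_neg (hr : r ∈ P) {b : ℕ} (hb : b ∈ r.neg) : b ∈ atoms P :=
  ruleAtoms_subset_atoms hr (Or.inr hb)

theorem headTrue_atoms (hr : r ∈ P) (h : headTrue I r.head) : headTrue (atoms P) r.head := by
  cases hhead : r.head with
  | none => simp [hhead, headTrue] at h
  | some a => exact ruleAtoms_subset_atoms hr (Or.inl (Or.inl hhead))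

/-- The negative bodies of `P1` only mention atoms of `P1`, so they are evaluated the same
way in `M` and in `M ∩ atoms P1`. -/
theorem isModel_reduct_inter_atoms (hP : P1 ⊆ P) (hM : isModel (reduct P M) M) :
    isModel (reduct P1 (M ∩ atoms P1)) (M ∩ atoms P1) := by
  rw [isModel_reduct_iff] at hM ⊢
  intro r hr hneg hpos
  have hheadM : headTrue M r.head :=
    hM r (hP hr) (fun b hb hbM => hneg b hb ⟨hbM, mem_atoms_of_mem_neg hr hb⟩)
      (fun b hb => (hpos b hb).1)
  exact headTrue_inter.2 ⟨hheadM, headTrue_atoms hr hheadM⟩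

/-- If `N` models the reduct of `P1` by `M ∩ atoms P1`, then `M ∩ (N ∪ (atoms P1)ᶜ)`, which
agrees with `N` on `atoms P1` and with `M` elsewhere, models the reduct of `P1 ∪ P2` by `M`:
rules of `P2` have their heads outside `atoms P1`, where nothing of `M` was removed. -/
theorem isModel_reduct_union_inter (hPU : potentiallyUses P2 P1)
    (hM : isModel (reduct (P1 ∪ P2) M) M) (hN : isModel (reduct P1 (M ∩ atoms P1)) N) :
    isModel (reduct (P1 ∪ P2) M) (M ∩ (N ∪ (atoms P1)ᶜ)) := by
  rw [isModel_reduct_iff] at hM hN ⊢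
  intro r hr hneg hpos
  have hheadM : headTrue M r.head := hM r hr hneg (fun b hb => (hpos b hb).1)
  refine headTrue_inter.2 ⟨hheadM, ?_⟩
  rcases hr with hr1 | hr2
  · have hposN : ∀ b ∈ r.pos, b ∈ N := fun b hb =>
      (hpos b hb).2.resolve_right (not_not.2 (mem_atoms_of_mem_pos hr1 hb))
    exact headTrue_mono Set.subset_union_left
      (hN r hr1 (fun b hb hbM => hneg b hb hbM.1) hposN)
  · cases hhead : r.head with
    | none => simp [hhead, headTrue] at hheadM
    | some a => exact Or.inr (hPU r hr2 a hhead)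

end LP

theorem splitting_restriction_general (P1 P2 : Set LPRule)
    (hPU : LP.potentiallyUses P2 P1) :
    ∀ M, LP.isStable (P1 ∪ P2) M → LP.isStable P1 (M ∩ LP.atoms P1) := by
  rintro M ⟨hMod, hMin⟩
  refine ⟨LP.isModel_reduct_inter_atoms Set.subset_union_left hMod, fun N hN => ?_⟩
  have hMsub : M ⊆ M ∩ (N ∪ (LP.atoms P1)ᶜ) := hMin _ (LP.isModel_reduct_union_inter hPU hMod hN)
  rintro a ⟨haM, haA⟩
  exact (hMsub haM).2.resolve_right (not_not.2 haA)

/-- if `P2` potentially uses `P1`, the restriction of any stable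
model of `P1 ∪ P2` to the atoms of `P1` is a stable model of `P1`. -/
theorem splitting_restriction (P1 P2 : Set LPRule)
    (hFin1 : P1.Finite) (hFin2 : P2.Finite)
    (hPU : LP.potentiallyUses P2 P1) :
    ∀ M, LP.isStable (P1 ∪ P2) M → LP.isStable P1 (M ∩ LP.atoms P1) :=
  splitting_restriction_general P1 P2 hPU
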